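/- arXiv:1608.02241 — 2 statements merged into one kernel-verified Lean document; each statement's English description precedes it below -/
import Mathlib

section
/- Let k ≥ 1 and c ≥ 1 be integers and let p ∈ (0,1) with q = 1 - p. For z ∈ ℕ let ℓ(p, z) = k·c·log(1-p) + z · log(1 - (1-p)^k). Then ∑_{z=0}^∞ C(c+z-1, z) · (q^k)^c · (1-q^k)^z · (−∂²ℓ/∂p²)(p, z) = c k² / (q² (1 - q^k)), where ∂²ℓ/∂p² denotes the second derivative of ℓ(·, z) with respect to p. -/
/-!
With q = 1 - p and s = q ^ k one has ds/dp = -k s / q, so both derivatives of ℓ(·, z) are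
rational in q and s, and -∂²ℓ/∂p² = k c / q² + z · k s (k - 1 + s) / (q² (1 - s)²).
The negative binomial weights sum to 1 and have mean E[Z] = c (1 - s) / s; substituting gives
k c / q² · (1 + (k - 1 + s) / (1 - s)) = c k² / (q² (1 - s)).
-/

open Filter Topology

section NegativeBinomialSeries

variable {𝕜 : Type*} [NormedField 𝕜]

theorem hasSum_choose_add_sub_one_mul_pow (c : ℕ) {x : 𝕜} (hx : ‖x‖ < 1) :
    HasSum (fun z : ℕ => ((c + z - 1).choose z : 𝕜) * x ^ z) (1 / (1 - x) ^ c) := by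
  cases c with
  | zero =>
    -- with ℕ subtraction, `(z - 1).choose z = 0` for `z ≥ 1`: only the term `z = 0` survives
    convert hasSum_single (f := fun z : ℕ => ((0 + z - 1).choose z : 𝕜) * x ^ z) 0
      fun z hz => by simp [Nat.choose_eq_zero_of_lt (Nat.sub_lt (Nat.pos_of_ne_zero hz) one_pos)]
    simp
  | succ m =>
    convert hasSum_choose_mul_geometric_of_norm_lt_one m hx using 3 with z
    rw [← Nat.choose_symm_add]
    congr 2
    omega

theorem Nat.succ_mul_add_choose_succ (c j : ℕ) :
    (j + 1) * (c + j).choose (j + 1) = c * (c + j).choose j := by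
  rw [mul_comm, Nat.choose_succ_right_eq, Nat.add_sub_cancel, mul_comm]

theorem hasSum_mul_choose_add_sub_one_mul_pow (c : ℕ) {x : 𝕜} (hx : ‖x‖ < 1) :
    HasSum (fun z : ℕ => (z : 𝕜) * (c + z - 1).choose z * x ^ z)
      (c * x / (1 - x) ^ (c + 1)) := by
  have shifted := (hasSum_choose_add_sub_one_mul_pow (c + 1) hx).mul_left ((c : 𝕜) * x)
  have hterm : ∀ j : ℕ, ((j + 1 : ℕ) : 𝕜) * (c + (j + 1) - 1).choose (j + 1) * x ^ (j + 1) =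
      c * x * ((c + 1 + j - 1).choose j * x ^ j) := fun j => by
    have h := congrArg (Nat.cast (R := 𝕜)) (Nat.succ_mul_add_choose_succ c j)
    push_cast at h
    rw [show c + (j + 1) - 1 = c + j by omega, show c + 1 + j - 1 = c + j by omega, pow_succ]
    push_cast
    linear_combination x ^ j * x * h
  refine (hasSum_nat_add_iff' 1).1 ?_
  simp only [hterm, Finset.range_one, Finset.sum_singleton, Nat.cast_zero, zero_mul, sub_zero]
  rwa [mul_one_div] at shifted

end NegativeBinomialSeries

theorem natCast_mul_pow_sub_one {K : Type*} [Field K] (k : ℕ) {x : K} (hx : x ≠ 0) :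
    (k : K) * x ^ (k - 1) = k * x ^ k / x := by
  cases k with
  | zero => simp
  | succ m => rw [Nat.add_sub_cancel, pow_succ, mul_div_assoc, mul_div_cancel_right₀ _ hx]

section LogLikelihood

variable (k : ℕ) (a b : ℝ) {t : ℝ}

theorem hasDerivAt_one_sub_pow (ht : 1 - t ≠ 0) :
    HasDerivAt (fun y : ℝ => (1 - y) ^ k) (-(k * (1 - t) ^ k / (1 - t))) t :=
  (((hasDerivAt_id' t).const_sub 1).pow k).congr_deriv
    (by rw [natCast_mul_pow_sub_one k ht]; ring)

theorem hasDerivAt_logLik (ht : 1 - t ≠ 0) (hs : 1 - (1 - t) ^ k ≠ 0) :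
    HasDerivAt (fun y : ℝ => a * Real.log (1 - y) + b * Real.log (1 - (1 - y) ^ k))
      (-a / (1 - t) + b * k * (1 - t) ^ k / ((1 - t) * (1 - (1 - t) ^ k))) t := by
  have hq := ((hasDerivAt_id' t).const_sub 1).log ht
  have hs' := ((hasDerivAt_one_sub_pow k ht).const_sub 1).log hs
  refine ((hq.const_mul a).add (hs'.const_mul b)).congr_deriv ?_
  field_simp

theorem hasDerivAt_score (ht : 1 - t ≠ 0) (hs : 1 - (1 - t) ^ k ≠ 0) :
    HasDerivAt (fun y : ℝ => -a / (1 - y) + b * k * (1 - y) ^ k / ((1 - y) * (1 - (1 - y) ^ k)))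
      (-a / (1 - t) ^ 2 -
        b * k * (1 - t) ^ k * (k - 1 + (1 - t) ^ k) / ((1 - t) ^ 2 * (1 - (1 - t) ^ k) ^ 2)) t := by
  have hq := (hasDerivAt_id' t).const_sub 1
  have hs' := hasDerivAt_one_sub_pow k ht
  refine (((hasDerivAt_const t (-a)).div hq ht).add
    ((hs'.const_mul (b * k)).div (hq.mul (hs'.const_sub 1)) (mul_ne_zero ht hs))).congr_deriv ?_
  simp only [Pi.mul_apply]
  field_simp
  ring

theorem iteratedDeriv_two_logLik {p : ℝ} (hp : 1 - p ≠ 0) (hs : 1 - (1 - p) ^ k ≠ 0) :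
    iteratedDeriv 2 (fun y : ℝ => a * Real.log (1 - y) + b * Real.log (1 - (1 - y) ^ k)) p =
      -a / (1 - p) ^ 2 -
        b * k * (1 - p) ^ k * (k - 1 + (1 - p) ^ k) / ((1 - p) ^ 2 * (1 - (1 - p) ^ k) ^ 2) := by
  have near : ∀ᶠ y in 𝓝 p, 1 - y ≠ 0 ∧ 1 - (1 - y) ^ k ≠ 0 :=
    (ContinuousAt.eventually_ne (by fun_prop) hp).and (ContinuousAt.eventually_ne (by fun_prop) hs)
  have hderiv : deriv (fun y : ℝ => a * Real.log (1 - y) + b * Real.log (1 - (1 - y) ^ k)) =ᶠ[𝓝 p]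
      fun y => -a / (1 - y) + b * k * (1 - y) ^ k / ((1 - y) * (1 - (1 - y) ^ k)) :=
    near.mono fun y hy => (hasDerivAt_logLik k a b hy.1 hy.2).deriv
  rw [iteratedDeriv_succ, iteratedDeriv_one, hderiv.deriv_eq, (hasDerivAt_score k a b hp hs).deriv]

end LogLikelihood

theorem stmt_14_general (k c : ℕ) (hk : 1 ≤ k) (p : ℝ)
    (hp : p ∈ Set.Ioo (0 : ℝ) 1) :
    HasSum (fun z : ℕ =>
      ((c + z - 1).choose z : ℝ) * ((1 - p) ^ k) ^ c * (1 - (1 - p) ^ k) ^ z *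
        (- iteratedDeriv 2
            (fun t : ℝ => k * c * Real.log (1 - t) + z * Real.log (1 - (1 - t) ^ k)) p))
      ((c : ℝ) * k ^ 2 / ((1 - p) ^ 2 * (1 - (1 - p) ^ k))) := by
  obtain ⟨hp0, hp1⟩ := hp
  have hq : 0 < 1 - p := by linarith
  have hs0 : 0 < (1 - p) ^ k := pow_pos hq k
  have hs1 : (1 - p) ^ k < 1 := pow_lt_one₀ hq.le (by linarith) (by omega)
  have hx0 : 1 - (1 - p) ^ k ≠ 0 := sub_ne_zero.2 hs1.ne'
  have hx : ‖1 - (1 - p) ^ k‖ < 1 := by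
    rw [Real.norm_eq_abs, abs_sub_lt_iff]
    constructor <;> linarith
  simp only [iteratedDeriv_two_logLik k _ _ hq.ne' hx0]
  set s := (1 - p) ^ k
  have weights := (hasSum_choose_add_sub_one_mul_pow c hx).mul_left (s ^ c * (k * c / (1 - p) ^ 2))
  have mean := (hasSum_mul_choose_add_sub_one_mul_pow c hx).mul_left
    (s ^ c * (k * s * (k - 1 + s) / ((1 - p) ^ 2 * (1 - s) ^ 2)))
  have value : (c : ℝ) * k ^ 2 / ((1 - p) ^ 2 * (1 - s)) =
      s ^ c * (k * c / (1 - p) ^ 2) * (1 / (1 - (1 - s)) ^ c) +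
      s ^ c * (k * s * (k - 1 + s) / ((1 - p) ^ 2 * (1 - s) ^ 2)) *
        (c * (1 - s) / (1 - (1 - s)) ^ (c + 1)) := by
    rw [sub_sub_cancel]
    field_simp
    ring
  rw [value]
  exact (weights.add mean).congr_fun fun z => by ring

/-- Fisher information under model (c):
E[-∂²ℓ/∂p²] = c k²/(q²(1-q^k)), where q = 1 - p and
ℓ(p,z) = k·c·log(1-p) + z·log(1-(1-p)^k). -/
theorem stmt_14 (k c : ℕ) (hk : 1 ≤ k) (hc : 1 ≤ c) (p : ℝ)
    (hp : p ∈ Set.Ioo (0 : ℝ) 1) :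
    HasSum (fun z : ℕ =>
      ((c + z - 1).choose z : ℝ) * ((1 - p) ^ k) ^ c * (1 - (1 - p) ^ k) ^ z *
        (- iteratedDeriv 2
            (fun t : ℝ => k * c * Real.log (1 - t) + z * Real.log (1 - (1 - t) ^ k)) p))
      ((c : ℝ) * k ^ 2 / ((1 - p) ^ 2 * (1 - (1 - p) ^ k))) :=
  stmt_14_general k c hk p hp
end

section
/- Let k ≥ 1 and c ≥ 1 be integers and let p ∈ (0,1) with q = 1 - p. For z ∈ ℕ let ℓ(p, z) = k·c·log(1-p) + z · log(1 - (1-p)^k). Then ∑_{z=0}^∞ C(c+z-1, z) · (q^k)^c · (1-q^k)^z · (∂³ℓ/∂p³)(p, z) = (kc/q³) · ( 2k² q^{2k}/(1-q^k)² + 3k(k-1) q^k/(1-q^k) + k(k-3) ), where ∂³ℓ/∂p³ denotes the third derivative of ℓ(·, z) with respect to p. -/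
/-!
With `q = 1 - p` the log-likelihood is `ℓ(p, z) = L(1 - p)` for
`L(u) = kc log u + z log (1 - u ^ k)`, so `∂³ℓ/∂p³ = -(kc (log)'''(q) + z h'''(q))` with
`h(u) = log (1 - u ^ k)`: it is affine in `z`. Its expectation therefore only involves the total
mass `1` and the mean `c (1 - q ^ k) / q ^ k` of the negative binomial law, both read off from
`∑ C(z + n, n) x ^ z = (1 - x)⁻¹ ^ (n + 1)` with `c = n + 1`; for the mean,
`z C(z + n, n) = (n + 1) C(z + n, n + 1)` turns it into the total mass of the law with `c + 1`.
-/

open Filter Topology Real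

section ThirdDerivative

variable {𝕜 F : Type*} [NontriviallyNormedField 𝕜] [NormedAddCommGroup F] [NormedSpace 𝕜 F]

theorem iteratedDeriv_three_eq_of_hasDerivAt {f f₁ f₂ : 𝕜 → F} {f₃ : F} {x : 𝕜}
    (h₁ : ∀ᶠ y in 𝓝 x, HasDerivAt f (f₁ y) y) (h₂ : ∀ᶠ y in 𝓝 x, HasDerivAt f₁ (f₂ y) y)
    (h₃ : HasDerivAt f₂ f₃ x) : iteratedDeriv 3 f x = f₃ := by
  have e₁ : deriv f =ᶠ[𝓝 x] f₁ := h₁.mono fun y hy => hy.deriv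
  have e₂ : deriv (deriv f) =ᶠ[𝓝 x] f₂ := e₁.deriv.trans (h₂.mono fun y hy => hy.deriv)
  rw [iteratedDeriv_succ, iteratedDeriv_succ, iteratedDeriv_one, e₂.deriv_eq, h₃.deriv]

theorem hasDerivAt_pow_of_ne_zero {u : 𝕜} (hu : u ≠ 0) (k : ℕ) :
    HasDerivAt (fun u : 𝕜 => u ^ k) (k * u ^ k / u) u := by
  refine (hasDerivAt_pow k u).congr_deriv ?_
  rcases k with _ | m
  · simp
  · rw [Nat.add_sub_cancel]
    field_simp
    ring

end ThirdDerivative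

theorem Real.iteratedDeriv_three_log (u : ℝ) : iteratedDeriv 3 log u = 2 / u ^ 3 := by
  rw [iteratedDeriv_succ', deriv_log', iteratedDeriv_eq_iterate, iter_deriv_inv]
  norm_num [zpow_neg, div_eq_mul_inv]

theorem Real.iteratedDeriv_three_log_one_sub_pow {k : ℕ} {u : ℝ} (hu : u ≠ 0) (huk : u ^ k ≠ 1) :
    iteratedDeriv 3 (fun u => log (1 - u ^ k)) u =
      -(k * u ^ k * (2 * k ^ 2 * u ^ (2 * k) + 3 * k * (k - 1) * u ^ k * (1 - u ^ k) +
        (k * (k - 3) + 2) * (1 - u ^ k) ^ 2) / (u ^ 3 * (1 - u ^ k) ^ 3)) := by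
  have hnear : ∀ᶠ y in 𝓝 u, y ≠ 0 ∧ 1 - y ^ k ≠ 0 :=
    (eventually_ne_nhds hu).and ((continuous_const.sub (continuous_pow k)).continuousAt.eventually_ne
      (sub_ne_zero.2 huk.symm))
  have hpow : ∀ {y : ℝ}, y ≠ 0 → HasDerivAt (fun u : ℝ => u ^ k) (k * y ^ k / y) y :=
    fun hy => hasDerivAt_pow_of_ne_zero hy k
  refine iteratedDeriv_three_eq_of_hasDerivAt
    (f₁ := fun y : ℝ => -((k : ℝ) * y ^ k / (y * (1 - y ^ k))))
    (f₂ := fun y : ℝ => (k : ℝ) * y ^ k * (1 - k - y ^ k) / (y ^ 2 * (1 - y ^ k) ^ 2)) ?_ ?_ ?_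
  · filter_upwards [hnear] with y ⟨hy, hyk⟩
    refine (((hpow hy).const_sub 1).log hyk).congr_deriv ?_
    field_simp
  · filter_upwards [hnear] with y ⟨hy, hyk⟩
    refine (((hpow hy).const_mul (k : ℝ)).fun_div ((hasDerivAt_id' y).fun_mul
      ((hpow hy).const_sub 1)) (mul_ne_zero hy hyk)).fun_neg.congr_deriv ?_
    field_simp
    ring
  · have huk' := sub_ne_zero.2 huk.symm
    refine ((((hpow hu).const_mul (k : ℝ)).fun_mul ((hpow hu).const_sub (1 - (k : ℝ)))).fun_div
      (((hasDerivAt_id' u).fun_pow 2).fun_mul (((hpow hu).const_sub 1).fun_pow 2))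
      (mul_ne_zero (pow_ne_zero 2 hu) (pow_ne_zero 2 huk'))).congr_deriv ?_
    field_simp
    ring

theorem iteratedDeriv_three_mul_log_one_sub_add_mul_log_one_sub_pow (a b : ℝ) (k : ℕ) {t : ℝ}
    (ht : 1 - t ≠ 0) (htk : 1 - (1 - t) ^ k ≠ 0) :
    iteratedDeriv 3 (fun t => a * log (1 - t) + b * log (1 - (1 - t) ^ k)) t =
      -(a * iteratedDeriv 3 log (1 - t) + b * iteratedDeriv 3 (fun u => log (1 - u ^ k)) (1 - t)) := by
  have h := congrFun (iteratedDeriv_comp_const_sub 3 (fun u => a * log u + b * log (1 - u ^ k)) 1) t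
  rw [h, iteratedDeriv_fun_add (by fun_prop (disch := assumption)) (by fun_prop (disch := assumption)),
    iteratedDeriv_const_mul_field, iteratedDeriv_const_mul_field, smul_eq_mul]
  ring

theorem Nat.mul_choose_add_eq (n z : ℕ) :
    z * (z + n).choose n = (n + 1) * (z + n).choose (n + 1) := by
  rw [mul_comm, mul_comm (n + 1), Nat.choose_succ_right_eq, Nat.add_sub_cancel]

section NegativeBinomial

variable {𝕜 : Type*} [NormedField 𝕜] {r : 𝕜}

theorem hasSum_choose_mul_pow_mul_one_sub_pow (n : ℕ) (hr : ‖1 - r‖ < 1) :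
    HasSum (fun z : ℕ => ((z + n).choose n : 𝕜) * r ^ (n + 1) * (1 - r) ^ z) 1 := by
  have hr₀ : r ≠ 0 := by rintro rfl; simp at hr
  have h := (hasSum_choose_mul_geometric_of_norm_lt_one n hr).mul_left (r ^ (n + 1))
  rw [sub_sub_cancel, mul_one_div_cancel (pow_ne_zero _ hr₀)] at h
  refine h.congr_fun fun z => ?_
  ring

theorem hasSum_mul_choose_mul_pow_mul_one_sub_pow (n : ℕ) (hr : ‖1 - r‖ < 1) :
    HasSum (fun z : ℕ => (z : 𝕜) * (((z + n).choose n : 𝕜) * r ^ (n + 1) * (1 - r) ^ z))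
      ((n + 1) * (1 - r) / r) := by
  have hr₀ : r ≠ 0 := by rintro rfl; simp at hr
  rw [← hasSum_nat_add_iff' 1]
  simp only [Finset.sum_range_one, Nat.cast_zero, zero_mul, sub_zero]
  have h := (hasSum_choose_mul_pow_mul_one_sub_pow (n + 1) hr).mul_left ((n + 1) * (1 - r) / r)
  rw [mul_one] at h
  refine h.congr_fun fun z => ?_
  rw [← mul_assoc, ← mul_assoc, ← Nat.cast_mul, Nat.mul_choose_add_eq, add_right_comm z 1 n,
    add_assoc z n 1]
  push_cast
  field_simp
  ring

theorem hasSum_choose_mul_pow_mul_one_sub_pow_mul_add_mul (n : ℕ) (hr : ‖1 - r‖ < 1) (a b : 𝕜) :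
    HasSum (fun z : ℕ => ((z + n).choose n : 𝕜) * r ^ (n + 1) * (1 - r) ^ z * (a + z * b))
      (a + (n + 1) * (1 - r) / r * b) := by
  have h := ((hasSum_choose_mul_pow_mul_one_sub_pow n hr).mul_right a).add
    ((hasSum_mul_choose_mul_pow_mul_one_sub_pow n hr).mul_right b)
  rw [one_mul] at h
  exact h.congr_fun fun z => by ring

end NegativeBinomial

/-- Under model (c),
E[∂³ℓ/∂p³] = (kc/q³)·(2k²q^(2k)/(1-q^k)² + 3k(k-1)q^k/(1-q^k) + k(k-3)),
where q = 1 - p and ℓ(p,z) = k·c·log(1-p) + z·log(1-(1-p)^k). -/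
theorem stmt_15 (k c : ℕ) (hk : 1 ≤ k) (hc : 1 ≤ c) (p : ℝ)
    (hp : p ∈ Set.Ioo (0 : ℝ) 1) :
    HasSum (fun z : ℕ =>
      ((c + z - 1).choose z : ℝ) * ((1 - p) ^ k) ^ c * (1 - (1 - p) ^ k) ^ z *
        iteratedDeriv 3
          (fun t : ℝ => k * c * Real.log (1 - t) + z * Real.log (1 - (1 - t) ^ k)) p)
      ((k : ℝ) * c / (1 - p) ^ 3 *
        (2 * (k : ℝ) ^ 2 * (1 - p) ^ (2 * k) / (1 - (1 - p) ^ k) ^ 2 +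
          3 * (k : ℝ) * ((k : ℝ) - 1) * (1 - p) ^ k / (1 - (1 - p) ^ k) +
          (k : ℝ) * ((k : ℝ) - 3))) := by
  obtain ⟨n, rfl⟩ : ∃ n, c = n + 1 := ⟨c - 1, by omega⟩
  obtain ⟨hp₀, hp₁⟩ := hp
  set q := 1 - p
  have hq₀ : 0 < q := by linarith
  have hqk₀ : 0 < q ^ k := pow_pos hq₀ k
  have hqk₁ : q ^ k < 1 := pow_lt_one₀ hq₀.le (by linarith) (by omega)
  have hr : ‖1 - q ^ k‖ < 1 := by
    rw [Real.norm_eq_abs, abs_lt]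
    constructor <;> linarith
  have hvalue : (k : ℝ) * (n + 1 : ℕ) / q ^ 3 *
        (2 * (k : ℝ) ^ 2 * q ^ (2 * k) / (1 - q ^ k) ^ 2 +
          3 * (k : ℝ) * ((k : ℝ) - 1) * q ^ k / (1 - q ^ k) + (k : ℝ) * ((k : ℝ) - 3)) =
      -(k * (n + 1 : ℕ) * iteratedDeriv 3 log q) +
        (n + 1) * (1 - q ^ k) / q ^ k * -iteratedDeriv 3 (fun u => log (1 - u ^ k)) q := by
    have hqk : 1 - q ^ k ≠ 0 := by linarith
    rw [Real.iteratedDeriv_three_log, Real.iteratedDeriv_three_log_one_sub_pow hq₀.ne' hqk₁.ne]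
    push_cast
    field_simp
    ring
  rw [hvalue]
  refine (hasSum_choose_mul_pow_mul_one_sub_pow_mul_add_mul n hr _ _).congr_fun fun z => ?_
  rw [iteratedDeriv_three_mul_log_one_sub_add_mul_log_one_sub_pow _ _ _ hq₀.ne' (by linarith),
    show n + 1 + z - 1 = z + n by omega, Nat.choose_symm_add]
  ring
end
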